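/- arXiv:1708.09746 — 7 statements merged into one kernel-verified Lean document; each statement's English description precedes it below -/
import Mathlib

section
/- Let F be a field of characteristic 2, V a finite GF(2)-linear subspace of F, and define s_V(x) = ∏_{c ∈ V} (x - c). Then s_V is a GF(2)-linear map on F, i.e., s_V(u+v) = s_V(u) + s_V(v) for all u, v ∈ F and s_V(λu) = λ s_V(u) for λ ∈ GF(2). -/
/-!
Write `s` for the monic polynomial `∏_{c ∈ V} (X - c)` of degree `|V|`. For fixed `u`, the
polynomial `s(X + u) - s(X)` has degree `< |V|`, since both terms are monic of the same degree.
As `V` is a group, `s(c + u) = s(u)` and `s(c) = 0` for `c ∈ V`, so this polynomial takes the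
value `s(u)` at the `|V|` points of `V` and is therefore the constant `s(u)`.
-/

open Polynomial Lagrange Finset

theorem Polynomial.degree_taylor_sub_lt {R : Type*} [Ring R] {p : R[X]} (hp : p ≠ 0) (r : R) :
    (taylor r p - p).degree < p.degree := by
  simpa only [degree_taylor] using
    degree_sub_lt_left (degree_taylor p r) ((taylor_eq_zero r p).not.mpr hp)
      (leadingCoeff_taylor r p)

namespace AddSubgroup

variable {F : Type*} [Field F] (V : AddSubgroup F) [Fintype V]

theorem eval_nodal_add_mem (x : F) (c : V) :
    (nodal univ ((↑) : V → F)).eval (x + c) = (nodal univ ((↑) : V → F)).eval x := by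
  simp only [eval_nodal]
  calc ∏ d : V, (x + (c : F) - (d : F)) = ∏ d : V, (x + (c : F) - ((d + c : V) : F)) :=
        (Equiv.prod_comp (Equiv.addRight c) _).symm
    _ = ∏ d : V, (x - (d : F)) := by simp only [coe_add, add_sub_add_right_eq_sub]

theorem eval_nodal_add (u v : F) :
    (nodal univ ((↑) : V → F)).eval (u + v) =
      (nodal univ ((↑) : V → F)).eval u + (nodal univ ((↑) : V → F)).eval v := by
  set s := nodal univ ((↑) : V → F)
  have hs : taylor u s - s = C (s.eval u) := by
    refine eq_of_degrees_lt_of_eval_index_eq (univ : Finset V) Subtype.val_injective.injOn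
      ?_ ?_ ?_
    · rw [← degree_nodal (v := ((↑) : V → F))]
      exact degree_taylor_sub_lt nodal_ne_zero u
    · exact degree_C_le.trans_lt (by exact_mod_cast card_pos.mpr univ_nonempty)
    · intro c hc
      rw [eval_sub, taylor_eval, eval_C, add_comm, eval_nodal_add_mem, eval_nodal_at_node hc,
        sub_zero]
  have hv := congrArg (eval v) hs
  rw [eval_sub, taylor_eval, eval_C, add_comm v u] at hv
  linear_combination hv

end AddSubgroup

/-- Let `F` be a field of characteristic 2, `V` a finite `GF(2)`-linear subspace of `F`
(equivalently, a finite additive subgroup), and `s_V(x) = ∏_{c ∈ V} (x - c)`.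
Then `s_V` is a `GF(2)`-linear map on `F`: it is additive, and commutes with
scalar multiplication by elements of `GF(2)`. -/
theorem stmt_3 (F : Type*) [Field F] [CharP F 2] (V : AddSubgroup F) [Fintype V]
    (sV : F → F) (hsV : ∀ x, sV x = ∏ c : V, (x - (c : F))) :
    (∀ u v : F, sV (u + v) = sV u + sV v) ∧
    (∀ (l : ZMod 2) (u : F),
      sV (ZMod.castHom (dvd_refl 2) F l * u) = ZMod.castHom (dvd_refl 2) F l * sV u) := by
  obtain rfl : sV = fun x => (nodal univ ((↑) : V → F)).eval x :=
    funext fun x => by rw [hsV, eval_nodal]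
  have hzero : (nodal univ ((↑) : V → F)).eval 0 = 0 :=
    eval_nodal_at_node (v := ((↑) : V → F)) (mem_univ 0)
  refine ⟨V.eval_nodal_add, fun l u => ?_⟩
  obtain rfl | rfl : l = 0 ∨ l = 1 := by revert l; decide
  · simpa using hzero
  · simp
end

section
/- Let F be a field of characteristic 2, V a finite additive subgroup of F, and β ∈ F \ V. Let W = V ∪ (V + β) (the subgroup generated by V and β). Then s_W(x) = s_V(x)² + s_V(β)·s_V(x), where s_U(x) = ∏_{c∈U}(x−c). -/
/-!
The polynomial `s_V = ∏_{c ∈ V} (X - c)` is additive: for fixed `y`, the difference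
`s_V(X + y) - s_V(X) - s_V(y)` vanishes on all of `V` (as `s_V` is invariant under translation
by `V`) but has degree below `|V|`, so it is zero. Since `W` is the disjoint union of `V` and
`V + β`, we get `s_W(x) = s_V(x) s_V(x + β) = s_V(x) (s_V(x) + s_V(β))` in characteristic 2.
-/

open Polynomial

namespace AddSubgroup

variable {R : Type*} [CommRing R] (V : AddSubgroup R) [Fintype V]

noncomputable def subgroupPoly : R[X] := ∏ c : V, (X - C (c : R))

lemma eval_subgroupPoly (x : R) : V.subgroupPoly.eval x = ∏ c : V, (x - c) := by
  simp [subgroupPoly, eval_prod]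

lemma isMonicOfDegree_subgroupPoly [Nontrivial R] :
    IsMonicOfDegree V.subgroupPoly (Fintype.card V) :=
  ⟨by simp [subgroupPoly], monic_prod_of_monic _ _ fun _ _ => monic_X_sub_C _⟩

lemma eval_subgroupPoly_of_mem {c : R} (hc : c ∈ V) : V.subgroupPoly.eval c = 0 := by
  rw [eval_subgroupPoly]
  exact Finset.prod_eq_zero (Finset.mem_univ ⟨c, hc⟩) (sub_self c)

lemma eval_subgroupPoly_add_of_mem (y : R) {c : R} (hc : c ∈ V) :
    V.subgroupPoly.eval (c + y) = V.subgroupPoly.eval y := by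
  simp only [eval_subgroupPoly]
  exact Fintype.prod_equiv (Equiv.subRight ⟨c, hc⟩) _ _ fun d => by
    rw [Equiv.subRight_apply, coe_sub]
    ring

theorem eval_subgroupPoly_add [IsDomain R] (x y : R) :
    V.subgroupPoly.eval (x + y) = V.subgroupPoly.eval x + V.subgroupPoly.eval y := by
  set P := V.subgroupPoly
  have hP : IsMonicOfDegree P (Fintype.card V) := V.isMonicOfDegree_subgroupPoly
  have hshift : IsMonicOfDegree (P.comp (X + C y)) (Fintype.card V) := by
    simpa using hP.comp one_ne_zero (isMonicOfDegree_X_add_one y)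
  suffices P.comp (X + C y) - P - C (P.eval y) = 0 by
    have := congrArg (eval x) this
    simp only [eval_sub, eval_comp, eval_add, eval_X, eval_C, eval_zero] at this
    linear_combination this
  refine eq_zero_of_natDegree_lt_card_of_eval_eq_zero _ (f := ((↑) : V → R))
    Subtype.val_injective (fun c => ?_) ?_
  · simp [eval_comp, P, V.eval_subgroupPoly_add_of_mem y c.2, V.eval_subgroupPoly_of_mem c.2]
  · rw [natDegree_sub_C]
    exact hshift.natDegree_sub_lt Fintype.card_ne_zero hP

lemma prod_image_union_image_add {G M : Type*} [AddGroup G] [DecidableEq G] [CommMonoid M]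
    (V : AddSubgroup G) [Fintype V] {β : G} (hβ : β ∉ V) (f : G → M) :
    ∏ c ∈ Finset.univ.image (fun c : V => (c : G)) ∪ Finset.univ.image (fun c : V => (c : G) + β),
        f c = (∏ c : V, f c) * ∏ c : V, f (c + β) := by
  have hdisj : Disjoint (Finset.univ.image (fun c : V => (c : G)))
      (Finset.univ.image (fun c : V => (c : G) + β)) := by
    simp only [Finset.disjoint_left, Finset.mem_image, Finset.mem_univ, true_and]
    rintro _ ⟨c, rfl⟩ ⟨d, hd⟩
    exact hβ (by simpa [← hd] using V.add_mem (V.neg_mem d.2) c.2)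
  rw [Finset.prod_union hdisj, Finset.prod_image (fun _ _ _ _ h => Subtype.ext h),
    Finset.prod_image (fun _ _ _ _ h => Subtype.ext (add_right_cancel h))]

end AddSubgroup

/-- Let `F` be a field of characteristic 2, `V` a finite additive subgroup of `F`,
and `β ∈ F \ V`.  Let `W = V ∪ (V + β)` (the subgroup generated by `V` and `β`).
Then `s_W(x) = s_V(x)² + s_V(β)·s_V(x)`, where `s_U(x) = ∏_{c ∈ U} (x − c)`. -/
theorem stmt_4 (F : Type*) [Field F] [CharP F 2] [DecidableEq F]
    (V : AddSubgroup F) [Fintype V] (β : F) (hβ : β ∉ V)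
    (W : Finset F)
    (hW : W = Finset.univ.image (fun c : V => (c : F))
            ∪ Finset.univ.image (fun c : V => (c : F) + β))
    (sV sW : F → F)
    (hsV : ∀ x, sV x = ∏ c : V, (x - (c : F)))
    (hsW : ∀ x, sW x = ∏ c ∈ W, (x - c)) :
    ∀ x, sW x = sV x ^ 2 + sV β * sV x := by
  have hsV_eval : ∀ x, sV x = V.subgroupPoly.eval x := fun x =>
    (hsV x).trans (V.eval_subgroupPoly x).symm
  intro x
  calc sW x = sV x * ∏ c : V, (x - (c + β)) := by
        rw [hsW, hW, V.prod_image_union_image_add hβ, hsV]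
    _ = sV x * sV (x + β) := by
        rw [hsV (x + β)]
        congr 1
        refine Finset.prod_congr rfl fun c _ => ?_
        simp only [CharTwo.sub_eq_add]
        ring
    _ = sV x ^ 2 + sV β * sV x := by
        rw [hsV_eval, hsV_eval, hsV_eval, V.eval_subgroupPoly_add]
        ring
end

section
/- Let F be a field of characteristic 2 with elements β₀ = 1 and β_{i+1} satisfying β_{i+1}² + β_{i+1} = β_i for all i (a Cantor basis). Define V_i = span_{GF(2)}{β₀,…,β_{i−1}} and s_i(x) = ∏_{a∈V_i}(x−a). Then s_{i+1}(x) = s_i(x)² + s_i(x) for all i, assuming β₀,…,β_i are GF(2)-linearly independent. -/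
open Polynomial Finset

section aux

variable {F : Type*} [Field F] [CharP F 2] [DecidableEq F]

/-- The set of subset sums. -/
private def WS (β : ℕ → F) (i : ℕ) : Finset F :=
  ((Finset.range i).powerset).image (fun S => ∑ j ∈ S, β j)

private lemma zero_mem_WS (β : ℕ → F) (i : ℕ) : (0 : F) ∈ WS β i := by
  refine Finset.mem_image.mpr ⟨∅, by simp, by simp⟩

private lemma sum_add_sum (β : ℕ → F) (S T : Finset ℕ) :
    (∑ j ∈ S, β j) + (∑ j ∈ T, β j) = ∑ j ∈ (S ∪ T) \ (S ∩ T), β j := by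
  have h1 : (∑ j ∈ S ∪ T, β j) + (∑ j ∈ S ∩ T, β j)
      = (∑ j ∈ S, β j) + (∑ j ∈ T, β j) := Finset.sum_union_inter
  have h2 : (∑ j ∈ (S ∪ T) \ (S ∩ T), β j) + (∑ j ∈ S ∩ T, β j)
      = ∑ j ∈ S ∪ T, β j := Finset.sum_sdiff (Finset.inter_subset_union)
  have h3 : (∑ j ∈ S ∩ T, β j) + (∑ j ∈ S ∩ T, β j) = 0 := CharTwo.add_self_eq_zero _
  calc (∑ j ∈ S, β j) + (∑ j ∈ T, β j)
      = (∑ j ∈ S ∪ T, β j) + (∑ j ∈ S ∩ T, β j) := h1.symm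
    _ = ((∑ j ∈ (S ∪ T) \ (S ∩ T), β j) + (∑ j ∈ S ∩ T, β j)) + (∑ j ∈ S ∩ T, β j) := by
        rw [h2]
    _ = ∑ j ∈ (S ∪ T) \ (S ∩ T), β j := by rw [add_assoc, h3, add_zero]

private lemma add_mem_WS (β : ℕ → F) (i : ℕ) {a b : F}
    (ha : a ∈ WS β i) (hb : b ∈ WS β i) : a + b ∈ WS β i := by
  obtain ⟨S, hS, rfl⟩ := Finset.mem_image.mp ha
  obtain ⟨T, hT, rfl⟩ := Finset.mem_image.mp hb
  refine Finset.mem_image.mpr ⟨(S ∪ T) \ (S ∩ T), ?_, (sum_add_sum β S T).symm⟩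
  rw [Finset.mem_powerset] at *
  exact (Finset.sdiff_subset).trans (Finset.union_subset hS hT)

/-- Additivity of the subspace polynomial as a function. -/
private lemma prod_additive (V : Finset F) (h0 : (0 : F) ∈ V)
    (hadd : ∀ a ∈ V, ∀ b ∈ V, a + b ∈ V) (x y : F) :
    ∏ a ∈ V, (x + y - a) = (∏ a ∈ V, (x - a)) + ∏ a ∈ V, (y - a) := by
  classical
  set P : F[X] := ∏ a ∈ V, (X - C a) with hP
  have hmon : P.Monic := monic_prod_of_monic _ _ fun a _ => monic_X_sub_C a
  have hdeg : P.natDegree = V.card := by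
    rw [hP, Polynomial.natDegree_prod _ _ fun a _ => X_sub_C_ne_zero a]
    simp
  have hevalP : ∀ z : F, P.eval z = ∏ a ∈ V, (z - a) := by
    intro z; simp [hP, Polynomial.eval_prod]
  have hcard : 0 < V.card := Finset.card_pos.mpr ⟨0, h0⟩
  have hshift : ∀ a ∈ V, ∀ z : F, P.eval (a + z) = P.eval z := by
    intro a ha z
    rw [hevalP, hevalP]
    refine Finset.prod_nbij' (fun b => b + a) (fun b => b + a) ?_ ?_ ?_ ?_ ?_
    · intro b hb; exact hadd b hb a ha
    · intro b hb; exact hadd b hb a ha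
    · intro b _; show b + a + a = b; rw [add_assoc, CharTwo.add_self_eq_zero, add_zero]
    · intro b _; show b + a + a = b; rw [add_assoc, CharTwo.add_self_eq_zero, add_zero]
    · intro b _
      rw [CharTwo.sub_eq_add, CharTwo.sub_eq_add]; ring
  set Q : F[X] := P.comp (X + C y) - P - C (P.eval y) with hQdef
  have hQ : Q = 0 := by
    have heval : ∀ a ∈ V, Q.eval a = 0 := by
      intro a ha
      have hPa : P.eval a = 0 := by
        rw [hevalP]; exact Finset.prod_eq_zero ha (sub_self a)
      simp [hQdef, Polynomial.eval_comp, hPa, hshift a ha y]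
    by_cases h : Q = 0
    · exact h
    · refine Polynomial.eq_zero_of_natDegree_lt_card_of_eval_eq_zero' Q V heval ?_
      rw [Polynomial.natDegree_lt_iff_degree_lt h]
      have hPc : (P.comp (X + C y)).Monic := hmon.comp_X_add_C y
      have hdc : (P.comp (X + C y)).natDegree = V.card := by
        rw [Polynomial.natDegree_comp, hdeg]; simp
      have hdegP : P.degree = (V.card : WithBot ℕ) := by
        rw [Polynomial.degree_eq_natDegree hmon.ne_zero, hdeg]
      have hdegPc : (P.comp (X + C y)).degree = (V.card : WithBot ℕ) := by
        rw [Polynomial.degree_eq_natDegree hPc.ne_zero, hdc]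
      have h1 : (P.comp (X + C y) - P).degree < (V.card : WithBot ℕ) := by
        have := Polynomial.degree_sub_lt (hdegPc.trans hdegP.symm) hPc.ne_zero
          (by rw [hPc.leadingCoeff, hmon.leadingCoeff])
        rwa [hdegPc] at this
      have h0c : (0 : WithBot ℕ) < (V.card : WithBot ℕ) := by exact_mod_cast hcard
      exact lt_of_le_of_lt (Polynomial.degree_sub_le _ _)
        (max_lt h1 (lt_of_le_of_lt Polynomial.degree_C_le h0c))
  have := congrArg (Polynomial.eval x) hQ
  simp only [hQdef, Polynomial.eval_sub, Polynomial.eval_comp, Polynomial.eval_add,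
    Polynomial.eval_X, Polynomial.eval_C, Polynomial.eval_zero] at this
  have hxy : P.eval (x + y) = P.eval x + P.eval y := by linear_combination this
  rw [← hevalP, ← hevalP, ← hevalP, hxy]

end aux

section aux2

variable {F : Type*} [Field F] [CharP F 2] [DecidableEq F]

private lemma WS_additive (β : ℕ → F) (i : ℕ) (x y : F) :
    ∏ a ∈ WS β i, (x + y - a) =
      (∏ a ∈ WS β i, (x - a)) + ∏ a ∈ WS β i, (y - a) :=
  prod_additive (WS β i) (zero_mem_WS β i) (fun a ha b hb => add_mem_WS β i ha hb) x y

private lemma sq_mem_WS (β : ℕ → F) (hβ0 : β 0 = 1)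
    (hβ : ∀ i, β (i + 1) ^ 2 + β (i + 1) = β i) (i : ℕ) {a : F}
    (ha : a ∈ WS β i) : a ^ 2 ∈ WS β i := by
  obtain ⟨S, hS, rfl⟩ := Finset.mem_image.mp ha
  rw [Finset.mem_powerset] at hS
  rw [CharTwo.sum_sq]
  refine Finset.sum_induction _ (· ∈ WS β i)
    (fun a b ha hb => add_mem_WS β i ha hb) (zero_mem_WS β i) ?_
  intro j hj
  have hji : j < i := Finset.mem_range.mp (hS hj)
  match j with
  | 0 =>
    refine Finset.mem_image.mpr ⟨{0}, ?_, ?_⟩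
    · simpa using hji
    · simp [hβ0, pow_two]
  | (k + 1) =>
    refine Finset.mem_image.mpr ⟨{k, k + 1}, ?_, ?_⟩
    · rw [Finset.mem_powerset]
      intro m hm
      simp only [Finset.mem_insert, Finset.mem_singleton] at hm
      rcases hm with rfl | rfl <;> exact Finset.mem_range.mpr (by omega)
    · rw [Finset.sum_pair (by omega : k ≠ k + 1)]
      have h1 := hβ k
      have h2 : (2 : F) = 0 := CharTwo.two_eq_zero
      linear_combination -h1 + β (k + 1) * h2

private lemma sq_inj : Function.Injective (fun x : F => x ^ 2) := by
  intro x y h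
  have h' : x ^ 2 = y ^ 2 := h
  have hz : (x - y) ^ 2 = 0 := by
    rw [CharTwo.sub_eq_add, CharTwo.add_sq, h', CharTwo.add_self_eq_zero]
  exact sub_eq_zero.mp ((pow_eq_zero_iff (two_ne_zero)).mp hz)

private lemma WS_image_sq (β : ℕ → F) (hβ0 : β 0 = 1)
    (hβ : ∀ i, β (i + 1) ^ 2 + β (i + 1) = β i) (i : ℕ) :
    (WS β i).image (· ^ 2) = WS β i := by
  have hinj : Function.Injective (fun x : F => x ^ 2) := sq_inj
  refine Finset.eq_of_subset_of_card_le ?_ ?_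
  · intro b hb
    obtain ⟨a, ha, rfl⟩ := Finset.mem_image.mp hb
    exact sq_mem_WS β hβ0 hβ i ha
  · rw [Finset.card_image_of_injective _ hinj]

private lemma WS_prod_sq (β : ℕ → F) (hβ0 : β 0 = 1)
    (hβ : ∀ i, β (i + 1) ^ 2 + β (i + 1) = β i) (i : ℕ) (z : F) :
    (∏ a ∈ WS β i, (z - a)) ^ 2 = ∏ a ∈ WS β i, (z ^ 2 - a) := by
  have hinj : Function.Injective (fun x : F => x ^ 2) := sq_inj
  calc (∏ a ∈ WS β i, (z - a)) ^ 2
      = ∏ a ∈ WS β i, (z - a) ^ 2 := by rw [Finset.prod_pow]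
    _ = ∏ a ∈ WS β i, (z ^ 2 - a ^ 2) := by
        refine Finset.prod_congr rfl fun a _ => ?_
        rw [CharTwo.sub_eq_add, CharTwo.sub_eq_add, CharTwo.add_sq]
    _ = ∏ b ∈ (WS β i).image (· ^ 2), (z ^ 2 - b) := by
        rw [Finset.prod_image fun a _ b _ h => hinj h]
    _ = ∏ a ∈ WS β i, (z ^ 2 - a) := by rw [WS_image_sq β hβ0 hβ i]

/-- The factorization `s_{i+1}(x) = s_i(x) ⬝ s_i(x - β_i)`, assuming independence. -/
private lemma WS_factor (β : ℕ → F) (i : ℕ)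
    (hind : ∀ S ⊆ Finset.range (i + 1), (∑ j ∈ S, β j) = 0 → S = ∅) (x : F) :
    ∏ a ∈ WS β (i + 1), (x - a) =
      (∏ a ∈ WS β i, (x - a)) * ∏ a ∈ WS β i, (x - β i - a) := by
  have hsplit : WS β (i + 1) = WS β i ∪ (WS β i).image (β i + ·) := by
    rw [WS, Finset.range_add_one, Finset.powerset_insert, Finset.image_union]
    congr 1
    rw [WS, Finset.image_image, Finset.image_image]
    refine Finset.image_congr ?_
    intro S hS
    rw [Finset.mem_coe, Finset.mem_powerset] at hS
    have hiS : i ∉ S := fun h => absurd (Finset.mem_range.mp (hS h)) (lt_irrefl i)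
    simp [Finset.sum_insert hiS]
  have hdisj : Disjoint (WS β i) ((WS β i).image (β i + ·)) := by
    rw [Finset.disjoint_left]
    intro c hc hc'
    obtain ⟨S, hS, rfl⟩ := Finset.mem_image.mp hc
    obtain ⟨b, hb, hbc⟩ := Finset.mem_image.mp hc'
    obtain ⟨T, hT, rfl⟩ := Finset.mem_image.mp hb
    rw [Finset.mem_powerset] at hS hT
    set U : Finset ℕ := (S ∪ T) \ (S ∩ T) with hU
    have hUr : U ⊆ Finset.range i :=
      (Finset.sdiff_subset).trans (Finset.union_subset hS hT)
    have hiU : i ∉ U := fun h => absurd (Finset.mem_range.mp (hUr h)) (lt_irrefl i)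
    have hsum : β i + ∑ j ∈ U, β j = 0 := by
      rw [hU, ← sum_add_sum]
      have h2 : (2 : F) = 0 := CharTwo.two_eq_zero
      linear_combination hbc + (∑ j ∈ S, β j) * h2
    have := hind (insert i U) ?_ ?_
    · exact absurd this (Finset.insert_ne_empty i U)
    · intro m hm
      rcases Finset.mem_insert.mp hm with rfl | hm
      · exact Finset.self_mem_range_succ m
      · exact Finset.mem_range.mpr (Nat.lt_succ_of_lt (Finset.mem_range.mp (hUr hm)))
    · rw [Finset.sum_insert hiU]; exact hsum
  rw [hsplit, Finset.prod_union hdisj]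
  congr 1
  rw [Finset.prod_image]
  · refine Finset.prod_congr rfl fun a _ => ?_
    rw [sub_add_eq_sub_sub]
  · intro a _ b _ h
    exact add_left_cancel h

private lemma WS_eval_one (β : ℕ → F) (hβ0 : β 0 = 1)
    (hβ : ∀ i, β (i + 1) ^ 2 + β (i + 1) = β i) :
    ∀ i, (∀ S ⊆ Finset.range (i + 1), (∑ j ∈ S, β j) = 0 → S = ∅) →
      ∏ a ∈ WS β i, (β i - a) = 1 := by
  intro i
  induction i with
  | zero =>
    intro _
    simp [WS, hβ0]
  | succ i ih =>
    intro hind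
    have hind' : ∀ S ⊆ Finset.range (i + 1), (∑ j ∈ S, β j) = 0 → S = ∅ := by
      intro S hS h
      exact hind S (hS.trans (Finset.range_subset_range.mpr (by omega))) h
    have h1 : ∏ a ∈ WS β i, (β i - a) = 1 := ih hind'
    set t : F := ∏ a ∈ WS β i, (β (i + 1) - a) with ht
    have hsub : β (i + 1) - β i = β (i + 1) + β i := CharTwo.sub_eq_add _ _
    calc ∏ a ∈ WS β (i + 1), (β (i + 1) - a)
        = t * ∏ a ∈ WS β i, (β (i + 1) - β i - a) := WS_factor β i hind' _
      _ = t * (t + 1) := by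
          rw [hsub, WS_additive, ← ht, h1]
      _ = t ^ 2 + t := by ring
      _ = (∏ a ∈ WS β i, (β (i + 1) ^ 2 - a)) + t := by
          rw [ht, WS_prod_sq β hβ0 hβ]
      _ = ∏ a ∈ WS β i, (β (i + 1) ^ 2 + β (i + 1) - a) := by
          rw [WS_additive]
      _ = 1 := by rw [hβ i, h1]

end aux2

/-- Let `F` be a field of characteristic 2 with a Cantor basis: `β₀ = 1` and
`β_{i+1}² + β_{i+1} = β_i` for all `i`.  Let `V_i` be the `GF(2)`-span of
`β₀, …, β_{i−1}` (the set of subset sums) and `s_i(x) = ∏_{a ∈ V_i} (x − a)`.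
Then for every `i`, assuming `β₀, …, β_i` are `GF(2)`-linearly independent,
`s_{i+1}(x) = s_i(x)² + s_i(x)`. -/
theorem stmt_5 (F : Type*) [Field F] [CharP F 2] [DecidableEq F] (β : ℕ → F)
    (hβ0 : β 0 = 1) (hβ : ∀ i, β (i + 1) ^ 2 + β (i + 1) = β i)
    (V : ℕ → Finset F)
    (hV : ∀ i, V i = ((Finset.range i).powerset).image (fun S => ∑ j ∈ S, β j))
    (s : ℕ → F → F) (hs : ∀ i x, s i x = ∏ c ∈ V i, (x - c)) :
    ∀ i, (∀ S ⊆ Finset.range (i + 1), (∑ j ∈ S, β j) = 0 → S = ∅) →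
      ∀ x, s (i + 1) x = s i x ^ 2 + s i x := by
  intro i hind x
  have hsW : ∀ j z, s j z = ∏ c ∈ WS β j, (z - c) := by
    intro j z; rw [hs, hV]; rfl
  rw [hsW (i + 1) x, hsW i x, WS_factor β i hind x]
  have hone : ∏ a ∈ WS β i, (β i - a) = 1 := WS_eval_one β hβ0 hβ i hind
  have hadd : ∏ a ∈ WS β i, (x - β i - a) = (∏ a ∈ WS β i, (x - a)) + 1 := by
    rw [CharTwo.sub_eq_add x (β i), WS_additive, hone]
  rw [hadd]; ring
end

section
/- With a Cantor basis (β_i) (β₀ = 1, β_i² + β_i = β_{i−1}) and vanishing polynomials s_i as above, s_i(β_i) = 1 for every i (assuming β₀,…,β_i are linearly independent over GF(2)). -/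
/-!
Write `P_n(x) = ∏_{S ⊆ {0,…,n-1}} (x - ∑_{j ∈ S} β_j)`. Splitting the subsets according to whether
they contain `n` gives `P_{n+1}(x) = P_n(x) P_n(x - β_n)`, and from this, by induction on `n`,
`P_{n+1}(x) = P_n(x² + x)`: in characteristic 2, `(x - β_{n+1})² + (x - β_{n+1}) = (x² + x) - β_n`.
Iterating, `P_n(β_n) = P_{n-1}(β_{n-1}) = ⋯ = P_0(β_0) = 1`. Linear independence of the `β_j` makes
the subset sums distinct, so that `P_n` is the vanishing polynomial `s_n` of their span.
-/

open Finset

section SubsetSums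

variable {R : Type*} [CommRing R]

theorem sum_injOn_powerset_of_independent [CharP R 2] (β : ℕ → R) {A : Finset ℕ}
    (hind : ∀ S ⊆ A, ∑ j ∈ S, β j = 0 → S = ∅) :
    Set.InjOn (fun S => ∑ j ∈ S, β j) (A.powerset : Set (Finset ℕ)) := by
  intro S hS T hT hST
  have hsub : symmDiff S T ⊆ A :=
    symmDiff_subset_union.trans (union_subset (mem_powerset.mp hS) (mem_powerset.mp hT))
  have hsum : ∑ j ∈ symmDiff S T, β j = 0 := by
    rw [symmDiff_def, sup_eq_union, sum_union disjoint_sdiff_sdiff, ← CharTwo.sub_eq_add,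
      sum_sdiff_sub_sum_sdiff]
    exact sub_eq_zero.mpr hST
  exact symmDiff_eq_bot.mp (hind _ hsub hsum)

def subsetSumProd (β : ℕ → R) (n : ℕ) (x : R) : R :=
  ∏ S ∈ (range n).powerset, (x - ∑ j ∈ S, β j)

variable (β : ℕ → R)

@[simp]
theorem subsetSumProd_zero (x : R) : subsetSumProd β 0 x = x := by
  simp [subsetSumProd]

theorem subsetSumProd_succ (n : ℕ) (x : R) :
    subsetSumProd β (n + 1) x = subsetSumProd β n x * subsetSumProd β n (x - β n) := by
  unfold subsetSumProd
  rw [range_add_one, prod_powerset_insert notMem_range_self]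
  congr 1
  refine prod_congr rfl fun S hS => ?_
  rw [sum_insert fun h => notMem_range_self (mem_powerset.mp hS h)]
  ring

variable [CharP R 2] (hβ0 : β 0 = 1) (hβ : ∀ i, β (i + 1) ^ 2 + β (i + 1) = β i)
include hβ0 hβ

theorem subsetSumProd_succ_eq_comp (n : ℕ) (x : R) :
    subsetSumProd β (n + 1) x = subsetSumProd β n (x ^ 2 + x) := by
  induction n generalizing x with
  | zero =>
    rw [subsetSumProd_succ, subsetSumProd_zero, subsetSumProd_zero, subsetSumProd_zero, hβ0,
      CharTwo.sub_eq_add]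
    ring
  | succ n ih =>
    have hshift : (x - β (n + 1)) ^ 2 + (x - β (n + 1)) = (x ^ 2 + x) - β n := by
      rw [← hβ n]
      linear_combination (β (n + 1) ^ 2 - x * β (n + 1)) * CharTwo.two_eq_zero (R := R)
    rw [subsetSumProd_succ, ih, ih, hshift, ← subsetSumProd_succ]

theorem subsetSumProd_self (n : ℕ) : subsetSumProd β n (β n) = 1 := by
  induction n with
  | zero => rw [subsetSumProd_zero, hβ0]
  | succ n ih => rw [subsetSumProd_succ_eq_comp β hβ0 hβ, hβ, ih]

end SubsetSums

/-- With a Cantor basis `(β_i)` (`β₀ = 1`, `β_i² + β_i = β_{i−1}`) in a field of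
characteristic 2, `V_i` the `GF(2)`-span of `β₀, …, β_{i−1}` and
`s_i(x) = ∏_{a ∈ V_i}(x − a)`, we have `s_i(β_i) = 1` for every `i`
(assuming `β₀, …, β_i` are linearly independent over `GF(2)`). -/
theorem stmt_6 (F : Type*) [Field F] [CharP F 2] [DecidableEq F] (β : ℕ → F)
    (hβ0 : β 0 = 1) (hβ : ∀ i, β (i + 1) ^ 2 + β (i + 1) = β i)
    (V : ℕ → Finset F)
    (hV : ∀ i, V i = ((Finset.range i).powerset).image (fun S => ∑ j ∈ S, β j))
    (s : ℕ → F → F) (hs : ∀ i x, s i x = ∏ c ∈ V i, (x - c)) :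
    ∀ i, (∀ S ⊆ Finset.range (i + 1), (∑ j ∈ S, β j) = 0 → S = ∅) →
      s i (β i) = 1 := by
  intro i hind
  have hinj := sum_injOn_powerset_of_independent β fun S hS =>
    hind S (hS.trans (range_subset_range.mpr i.le_succ))
  rw [hs, hV, prod_image hinj]
  exact subsetSumProd_self β hβ0 hβ i
end

section
/- With a Cantor basis (β_i) and vanishing polynomials s_i, for every j and i ≤ j: s_i(β_j) = β_{j−i} (interpreting β indices via repeated application of x ↦ x²+x), i.e., applying s₁ to β_j yields β_{j−1}; consequently s_i(φ_β(k)) = φ_β(k ≫ i), where φ_β(k) = Σ b_j β_j for binary digits b_j of k (k ≫ i is the right bit-shift). -/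
/-! Over a field of characteristic 2 the map `x ↦ x² + x` is additive (it is Frobenius plus the
identity), and on a Cantor basis it sends `β₀ ↦ 0` and `β_{j+1} ↦ β_j`. Applied to
`φ_β(k) = Σ b_j β_j` it therefore kills the lowest digit and shifts the others down by one,
which is `φ_β(k ≫ 1)`; iterating gives `s_i(φ_β(k)) = φ_β(k ≫ i)`. -/

open Finset

/-- The paper's `φ_β`; summing over `range k` suffices because `k < 2 ^ k`. -/
def bitSum {M : Type*} [AddCommMonoid M] (β : ℕ → M) (k : ℕ) : M :=
  ∑ j ∈ range k, if k.testBit j then β j else 0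

section BitSum

variable {M : Type*} [AddCommMonoid M] (β : ℕ → M)

theorem bitSum_eq_sum_range {k n : ℕ} (hkn : k ≤ n) :
    bitSum β k = ∑ j ∈ range n, if k.testBit j then β j else 0 := by
  refine sum_subset (range_subset_range.mpr hkn) fun j _ hjk => ?_
  rw [Nat.testBit_eq_false_of_lt ((not_lt.mp (mem_range.not.mp hjk)).trans_lt j.lt_two_pow_self)]
  rfl

theorem map_bitSum_eq_bitSum_shiftRight_one (f : M →+ M) (hf0 : f (β 0) = 0)
    (hf : ∀ j, f (β (j + 1)) = β j) (k : ℕ) : f (bitSum β k) = bitSum β (k >>> 1) := by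
  have hshift : k >>> 1 ≤ k := by
    rw [Nat.shiftRight_eq_div_pow]
    exact Nat.div_le_self _ _
  rw [bitSum_eq_sum_range β k.le_succ, map_sum, sum_range_succ', bitSum_eq_sum_range β hshift]
  simp only [apply_ite f, map_zero, hf0, hf, ite_self, add_zero, Nat.testBit_shiftRight,
    Nat.add_comm 1]

theorem iterate_map_bitSum (f : M →+ M) (hf0 : f (β 0) = 0)
    (hf : ∀ j, f (β (j + 1)) = β j) (k i : ℕ) : f^[i] (bitSum β k) = bitSum β (k >>> i) := by
  induction i generalizing k with
  | zero => rfl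
  | succ i ih =>
    rw [Function.iterate_succ_apply, map_bitSum_eq_bitSum_shiftRight_one β f hf0 hf, ih,
      ← Nat.shiftRight_add, Nat.add_comm]

end BitSum

/-- With a Cantor basis `(β_i)` (`β₀ = 1`, `β_i² + β_i = β_{i−1}`), `s₁(x) = x² + x`
and `s_i` the `i`-fold iterate of `s₁`, and `φ_β(k) = Σ b_j β_j` for the binary
digits `b_j` of `k`: we have `s₁(β₀) = 0`, `s₁(β_j) = β_{j−1}` for `j ≥ 1`, and
`s_i(φ_β(k)) = φ_β(k ≫ i)` where `≫` is the right bit-shift. -/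
theorem stmt_7 (F : Type*) [Field F] [CharP F 2] (β : ℕ → F)
    (hβ0 : β 0 = 1) (hβ : ∀ i, β (i + 1) ^ 2 + β (i + 1) = β i)
    (s1 : F → F) (hs1 : ∀ x, s1 x = x ^ 2 + x)
    (φ : ℕ → F)
    (hφ : ∀ k, φ k = ∑ j ∈ Finset.range k, if k.testBit j then β j else 0) :
    s1 (β 0) = 0 ∧ (∀ j, s1 (β (j + 1)) = β j) ∧
    ∀ k i, s1^[i] (φ k) = φ (k >>> i) := by
  have hs1_add : s1 = ⇑((frobenius F 2).toAddMonoidHom + AddMonoidHom.id F) :=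
    funext fun x => by simp [hs1, frobenius_def]
  have hφ_bitSum : φ = bitSum β := funext hφ
  have hs1_β0 : s1 (β 0) = 0 := by rw [hs1, hβ0, one_pow, CharTwo.add_self_eq_zero]
  have hs1_β : ∀ j, s1 (β (j + 1)) = β j := fun j => (hs1 _).trans (hβ j)
  refine ⟨hs1_β0, hs1_β, fun k i => ?_⟩
  subst hs1_add hφ_bitSum
  exact iterate_map_bitSum β _ hs1_β0 hs1_β k i
end

section
/- In the tower field construction with basis elements v_k = ∏_{j: bit j of k = 1} x_{j+1}, for every i: v_i² + v_i ∈ V_i, where V_i = span_{GF(2)}{v₀, …, v_{i−1}}. -/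
/-!
Write `i = 2^k + j` with `j < 2^k`, so that `v_i = x_{k+1} v_j`. Since
`x_{k+1}² = x_{k+1} + v_{2^k - 1}` in characteristic two,
`v_i² + v_i = x_{k+1} (v_j² + v_j) + v_{2^k - 1} v_j²`.
The first summand lies in `x_{k+1} V_j ⊆ V_i` by induction. The second lies in `V_{2^k} ⊆ V_i`
because `V_{2^k}` is closed under multiplication: it is spanned by `V_{2^(k-1)}` and
`x_k V_{2^(k-1)}`, and the relation for `x_k²` again reduces products into this span.
-/

open Finset

section SubsetSums

variable {G ι : Type*} [AddCommGroup G] [DecidableEq ι]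

lemma sum_add_sum_eq_sum_sdiff_inter (h2 : ∀ g : G, g + g = 0) (f : ι → G) (S T : Finset ι) :
    ∑ j ∈ S, f j + ∑ j ∈ T, f j = ∑ j ∈ (S ∪ T) \ (S ∩ T), f j := by
  rw [← sum_union_inter, ← sum_sdiff (inter_subset_union (s := S) (t := T)), add_assoc, h2,
    add_zero]

lemma mem_image_powerset_sum_iff_mem_closure [DecidableEq G] (h2 : ∀ g : G, g + g = 0)
    (f : ι → G) (s : Finset ι) {y : G} :
    y ∈ s.powerset.image (fun S => ∑ j ∈ S, f j) ↔ y ∈ AddSubgroup.closure (f '' s) := by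
  constructor
  · intro hy
    obtain ⟨S, hS, rfl⟩ := mem_image.1 hy
    exact AddSubgroup.sum_mem _ fun j hj =>
      AddSubgroup.subset_closure ⟨j, mem_powerset.1 hS hj, rfl⟩
  · intro hy
    induction hy using AddSubgroup.closure_induction with
    | mem _ hz =>
      obtain ⟨j, hj, rfl⟩ := hz
      exact mem_image.2 ⟨{j}, by simpa using hj, sum_singleton f j⟩
    | zero => exact mem_image.2 ⟨∅, empty_mem_powerset s, sum_empty⟩
    | add _ _ _ _ hy hz =>
      obtain ⟨S, hS, rfl⟩ := mem_image.1 hy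
      obtain ⟨T, hT, rfl⟩ := mem_image.1 hz
      refine mem_image.2 ⟨(S ∪ T) \ (S ∩ T), mem_powerset.2 ?_, ?_⟩
      · exact sdiff_subset.trans (union_subset (mem_powerset.1 hS) (mem_powerset.1 hT))
      · exact (sum_add_sum_eq_sum_sdiff_inter h2 f S T).symm
    | neg z _ hz => rwa [neg_eq_of_add_eq_zero_left (h2 z)]

end SubsetSums

lemma prod_range_ite_testBit_eq_of_lt_two_pow {M : Type*} [CommMonoid M] (f : ℕ → M)
    {j n m : ℕ} (hj : j < 2 ^ n) (hnm : n ≤ m) :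
    ∏ l ∈ range m, (if j.testBit l then f l else 1) =
      ∏ l ∈ range n, (if j.testBit l then f l else 1) := by
  refine (prod_subset (range_subset_range.2 hnm) fun l _ hl => ?_).symm
  have hjl : j < 2 ^ l :=
    hj.trans_le (Nat.pow_le_pow_right two_pos (not_lt.1 (mem_range.not.1 hl)))
  rw [Nat.testBit_lt_two_pow hjl, if_neg Bool.false_ne_true]

section Tower

variable {R : Type*} [CommRing R] (x : ℕ → R)

def towerBasis (k : ℕ) : R :=
  ∏ l ∈ range k, if k.testBit l then x (l + 1) else 1

/-- `V_i`; in characteristic two the additive closure is the `GF(2)`-span. -/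
def initialSpan (v : ℕ → R) (i : ℕ) : AddSubgroup R :=
  AddSubgroup.closure (v '' Set.Iio i)

lemma initialSpan_mono (v : ℕ → R) {i i' : ℕ} (h : i ≤ i') : initialSpan v i ≤ initialSpan v i' :=
  AddSubgroup.closure_mono (Set.image_mono (Set.Iio_subset_Iio h))

lemma mem_initialSpan (v : ℕ → R) {j i : ℕ} (h : j < i) : v j ∈ initialSpan v i :=
  AddSubgroup.subset_closure ⟨j, h, rfl⟩

lemma towerBasis_zero : towerBasis x 0 = 1 := by
  simp [towerBasis]

lemma towerBasis_eq_prod_range_of_lt_two_pow {j n : ℕ} (hj : j < 2 ^ n) :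
    towerBasis x j = ∏ l ∈ range n, if j.testBit l then x (l + 1) else 1 := by
  rw [towerBasis, ← prod_range_ite_testBit_eq_of_lt_two_pow _ Nat.lt_two_pow_self
      (Nat.le_add_right j n),
    prod_range_ite_testBit_eq_of_lt_two_pow _ hj (Nat.le_add_left n j)]

lemma towerBasis_two_pow_add {k j : ℕ} (hj : j < 2 ^ k) :
    towerBasis x (2 ^ k + j) = x (k + 1) * towerBasis x j := by
  have hlt : 2 ^ k + j < 2 ^ (k + 1) := by rw [pow_succ]; omega
  rw [towerBasis_eq_prod_range_of_lt_two_pow x hlt, prod_range_succ,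
    towerBasis_eq_prod_range_of_lt_two_pow x hj, Nat.testBit_two_pow_add_eq,
    Nat.testBit_lt_two_pow hj, mul_comm]
  refine congrArg₂ _ rfl (prod_congr rfl fun l hl => ?_)
  rw [Nat.testBit_two_pow_add_gt (mem_range.1 hl)]

lemma towerBasis_two_pow_sub_one (k : ℕ) :
    towerBasis x (2 ^ k - 1) = ∏ l ∈ range k, x (l + 1) := by
  rw [towerBasis_eq_prod_range_of_lt_two_pow x (Nat.sub_lt (Nat.two_pow_pos k) one_pos)]
  refine prod_congr rfl fun l hl => ?_
  rw [Nat.testBit_two_pow_sub_one, if_pos (decide_eq_true (mem_range.1 hl))]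

lemma mul_mem_initialSpan_two_pow_add {k j : ℕ} (hj : j ≤ 2 ^ k) {y : R}
    (hy : y ∈ initialSpan (towerBasis x) j) :
    x (k + 1) * y ∈ initialSpan (towerBasis x) (2 ^ k + j) := by
  induction hy using AddSubgroup.closure_induction with
  | mem _ hz =>
    obtain ⟨l, hl, rfl⟩ := hz
    have hl : l < j := hl
    rw [← towerBasis_two_pow_add x (hl.trans_le hj)]
    exact mem_initialSpan _ (by omega)
  | zero => rw [mul_zero]; exact zero_mem _
  | add _ _ _ _ hy hz => rw [mul_add]; exact add_mem hy hz
  | neg _ _ hy => rw [mul_neg]; exact neg_mem hy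

lemma exists_add_mul_of_mem_initialSpan_two_pow_succ {k : ℕ} {y : R}
    (hy : y ∈ initialSpan (towerBasis x) (2 ^ (k + 1))) :
    ∃ a ∈ initialSpan (towerBasis x) (2 ^ k), ∃ b ∈ initialSpan (towerBasis x) (2 ^ k),
      a + x (k + 1) * b = y := by
  induction hy using AddSubgroup.closure_induction with
  | mem _ hz =>
    obtain ⟨l, hl, rfl⟩ := hz
    have hl : l < 2 ^ (k + 1) := hl
    rcases lt_or_ge l (2 ^ k) with hlk | hlk
    · exact ⟨_, mem_initialSpan _ hlk, 0, zero_mem _, by rw [mul_zero, add_zero]⟩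
    · obtain ⟨j, rfl⟩ := Nat.exists_eq_add_of_le hlk
      have hj : j < 2 ^ k := by rw [pow_succ] at hl; omega
      exact ⟨0, zero_mem _, _, mem_initialSpan _ hj, by rw [zero_add, towerBasis_two_pow_add x hj]⟩
  | zero => exact ⟨0, zero_mem _, 0, zero_mem _, by simp⟩
  | add _ _ _ _ hy hz =>
    obtain ⟨a, ha, b, hb, rfl⟩ := hy
    obtain ⟨c, hc, d, hd, rfl⟩ := hz
    exact ⟨a + c, add_mem ha hc, b + d, add_mem hb hd, by ring⟩
  | neg _ _ hy =>
    obtain ⟨a, ha, b, hb, rfl⟩ := hy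
    exact ⟨-a, neg_mem ha, -b, neg_mem hb, by ring⟩

variable [CharP R 2] (hx : ∀ m, x (m + 1) ^ 2 + x (m + 1) = ∏ j ∈ range m, x (j + 1))
include hx

lemma sq_eq_add_towerBasis_two_pow_sub_one (k : ℕ) :
    x (k + 1) ^ 2 = x (k + 1) + towerBasis x (2 ^ k - 1) := by
  rw [towerBasis_two_pow_sub_one, ← hx, add_left_comm, CharTwo.add_self_eq_zero, add_zero]

lemma mul_mem_initialSpan_two_pow (k : ℕ) {y z : R} (hy : y ∈ initialSpan (towerBasis x) (2 ^ k))
    (hz : z ∈ initialSpan (towerBasis x) (2 ^ k)) : y * z ∈ initialSpan (towerBasis x) (2 ^ k) := by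
  induction k generalizing y z with
  | zero =>
    simp only [initialSpan, pow_zero, Order.Iio_one, Set.image_singleton, towerBasis_zero,
      AddSubgroup.mem_closure_singleton] at hy hz ⊢
    obtain ⟨n, rfl⟩ := hy
    obtain ⟨m, rfl⟩ := hz
    exact ⟨n * m, by simp⟩
  | succ k ih =>
    obtain ⟨a, ha, b, hb, rfl⟩ := exists_add_mul_of_mem_initialSpan_two_pow_succ x hy
    obtain ⟨c, hc, d, hd, rfl⟩ := exists_add_mul_of_mem_initialSpan_two_pow_succ x hz
    have hp : towerBasis x (2 ^ k - 1) ∈ initialSpan (towerBasis x) (2 ^ k) :=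
      mem_initialSpan _ (Nat.sub_lt (Nat.two_pow_pos k) one_pos)
    have hexpand : (a + x (k + 1) * b) * (c + x (k + 1) * d) =
        (a * c + towerBasis x (2 ^ k - 1) * (b * d)) + x (k + 1) * (a * d + b * c + b * d) := by
      linear_combination (b * d) * sq_eq_add_towerBasis_two_pow_sub_one x hx k
    rw [hexpand, pow_succ, mul_two]
    refine add_mem (initialSpan_mono _ (Nat.le_add_right _ _) ?_) (mul_mem_initialSpan_two_pow_add x le_rfl ?_)
    · exact add_mem (ih ha hc) (ih hp (ih hb hd))
    · exact add_mem (add_mem (ih ha hd) (ih hb hc)) (ih hb hd)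

lemma towerBasis_sq_add_self_mem_initialSpan (i : ℕ) :
    towerBasis x i ^ 2 + towerBasis x i ∈ initialSpan (towerBasis x) i := by
  obtain ⟨k, hik⟩ : ∃ k, i < 2 ^ k := ⟨i, Nat.lt_two_pow_self⟩
  induction k generalizing i with
  | zero =>
    obtain rfl : i = 0 := by simpa using hik
    rw [towerBasis_zero, one_pow, CharTwo.add_self_eq_zero]
    exact zero_mem _
  | succ k ih =>
    rcases lt_or_ge i (2 ^ k) with hik' | hki
    · exact ih i hik'
    obtain ⟨j, rfl⟩ := Nat.exists_eq_add_of_le hki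
    have hj : j < 2 ^ k := by rw [pow_succ] at hik; omega
    have hvj := mem_initialSpan (towerBasis x) hj
    have hexpand : towerBasis x (2 ^ k + j) ^ 2 + towerBasis x (2 ^ k + j) =
        x (k + 1) * (towerBasis x j ^ 2 + towerBasis x j) +
          towerBasis x (2 ^ k - 1) * (towerBasis x j * towerBasis x j) := by
      rw [towerBasis_two_pow_add x hj]
      linear_combination towerBasis x j ^ 2 * sq_eq_add_towerBasis_two_pow_sub_one x hx k
    rw [hexpand]
    refine add_mem (mul_mem_initialSpan_two_pow_add x hj.le (ih j hj)) ?_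
    refine initialSpan_mono _ (Nat.le_add_right _ j) (mul_mem_initialSpan_two_pow x hx k ?_ ?_)
    · exact mem_initialSpan _ (Nat.sub_lt (Nat.two_pow_pos k) one_pos)
    · exact mul_mem_initialSpan_two_pow x hx k hvj hvj

end Tower

/-- In the tower field construction (`x_{m+1}² + x_{m+1} = x₁⋯x_m`, with basis
elements `v_k = ∏_{j : bit j of k = 1} x_{j+1}`), for every `i` we have
`v_i² + v_i ∈ V_i`, where `V_i` is the `GF(2)`-span of `v₀, …, v_{i−1}`
(the set of subset sums). -/
theorem stmt_12 (F : Type*) [Field F] [CharP F 2] [DecidableEq F] (x : ℕ → F)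
    (hx : ∀ m, x (m + 1) ^ 2 + x (m + 1) = ∏ j ∈ Finset.range m, x (j + 1))
    (v : ℕ → F)
    (hv : ∀ k, v k = ∏ j ∈ Finset.range k, if k.testBit j then x (j + 1) else 1) :
    ∀ i, v i ^ 2 + v i ∈
      ((Finset.range i).powerset).image (fun S => ∑ j ∈ S, v j) := by
  obtain rfl : v = towerBasis x := funext hv
  intro i
  rw [mem_image_powerset_sum_iff_mem_closure CharTwo.add_self_eq_zero, coe_range]
  exact towerBasis_sq_add_self_mem_initialSpan x hx i
end

section
/- In the tower field construction, let V_k = span_{GF(2)}{v₀,…,v_{k−1}} and s_k(x) = ∏_{b∈V_k}(x−b). Then s_k(v_k) = 1 for all k. -/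
/-!
Let `S z = z² + z` and let `V_k` be the set of subset sums of `v₀, …, v_{k-1}`. In
characteristic 2 the map `S` is additive, so if `S^[m] v_m = 1` for all `m < k` then
`V_{m+1} = V_m ⊔ (v_m + V_m)` for `m < k`, and induction gives `∏_{b ∈ V_k} (z - b) = S^[k] z`.
The theorem thus becomes `S^[k] v_k = 1`, proved by strong induction. Since
`S^[2^j] z = z^(2^2^j) + z`, for `k = 2^j + l` with `l < 2^j` we get `S^[2^j] v_l = 0` (as
`v_l ∈ V_{2^j}`) and `S^[2^j] x_{j+1} = S^[2^j - 1] v_{2^j - 1} = 1`, hence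
`S^[2^j] v_k = S^[2^j] (x_{j+1} v_l) = v_l` and `S^[k] v_k = S^[l] v_l = 1`.
-/

open Finset

section ArtinSchreier

variable (R : Type*) [CommRing R] [CharP R 2]

def artinSchreier : R →+ R where
  toFun z := z ^ 2 + z
  map_zero' := by simp
  map_add' a b := by rw [CharTwo.add_sq]; ring

variable {R}

theorem artinSchreier_apply (z : R) : artinSchreier R z = z ^ 2 + z := rfl

theorem iterate_artinSchreier_two_pow (j : ℕ) (z : R) :
    (artinSchreier R)^[2 ^ j] z = z ^ 2 ^ 2 ^ j + z := by
  induction j generalizing z with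
  | zero => simp [artinSchreier_apply]
  | succ j ih =>
    rw [pow_succ, mul_two, Function.iterate_add_apply, ih, ih, add_pow_char_pow, ← pow_mul,
      ← pow_add, ← mul_two, ← pow_succ]
    linear_combination z ^ 2 ^ 2 ^ j * CharTwo.two_eq_zero (R := R)

theorem iterate_artinSchreier_two_pow_mul {j : ℕ} {a b : R}
    (ha : (artinSchreier R)^[2 ^ j] a = 1) (hb : (artinSchreier R)^[2 ^ j] b = 0) :
    (artinSchreier R)^[2 ^ j] (a * b) = b := by
  rw [iterate_artinSchreier_two_pow] at ha hb ⊢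
  linear_combination b ^ 2 ^ 2 ^ j * ha + (1 - a) * hb + (a * b - b) * CharTwo.two_eq_zero (R := R)

end ArtinSchreier

section SubsetSums

variable {R : Type*} [CommRing R] [DecidableEq R]

def subsetSums (v : ℕ → R) (k : ℕ) : Finset R :=
  (range k).powerset.image fun S => ∑ j ∈ S, v j

theorem subsetSums_succ (v : ℕ → R) (k : ℕ) :
    subsetSums v (k + 1) = subsetSums v k ∪ (subsetSums v k).image (fun b => v k + b) := by
  unfold subsetSums
  rw [range_add_one, powerset_insert (range k) k, image_union, image_image, image_image]
  congr 1
  refine image_congr fun S hS => ?_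
  have : k ∉ S := fun h => by simpa using mem_powerset.1 hS h
  simp [sum_insert this]

theorem mem_subsetSums_of_lt (v : ℕ → R) {i k : ℕ} (h : i < k) : v i ∈ subsetSums v k :=
  mem_image.2 ⟨{i}, by simpa using h, sum_singleton _ _⟩

variable [CharP R 2]

theorem prod_sub_subsetSums_eq_iterate {v : ℕ → R} {k : ℕ}
    (hv : ∀ m < k, (artinSchreier R)^[m] (v m) = 1) (z : R) :
    ∏ b ∈ subsetSums v k, (z - b) = (artinSchreier R)^[k] z := by
  have : Nontrivial R := CharP.nontrivial_of_char_ne_one (v := 2) (by norm_num)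
  induction k generalizing z with
  | zero => simp [subsetSums]
  | succ k ih =>
    have ih := ih (fun m hm => hv m (by omega))
    have hzero : ∀ b ∈ subsetSums v k, (artinSchreier R)^[k] b = 0 := fun b hb => by
      rw [← ih]; exact prod_eq_zero hb (sub_self b)
    have hdisj : Disjoint (subsetSums v k) ((subsetSums v k).image (fun b => v k + b)) := by
      rw [disjoint_right]
      intro c hc hmem
      obtain ⟨b, hb, rfl⟩ := mem_image.1 hc
      have := hzero _ hmem
      rw [iterate_map_add, hv k k.lt_add_one, hzero b hb, add_zero] at this
      exact one_ne_zero this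
    rw [subsetSums_succ, prod_union hdisj, prod_image fun _ _ _ _ => add_left_cancel]
    simp_rw [← sub_sub, ih, Function.iterate_succ_apply', iterate_map_sub, hv k k.lt_add_one,
      artinSchreier_apply]
    linear_combination -(artinSchreier R)^[k] z * CharTwo.two_eq_zero (R := R)

end SubsetSums

section Tower

variable {R : Type*} [CommRing R]

def towerMonomial (x : ℕ → R) (k : ℕ) : R :=
  ∏ j ∈ range k, if k.testBit j then x (j + 1) else 1

variable {x : ℕ → R}

theorem towerMonomial_eq_prod_range {k n : ℕ} (hk : k < 2 ^ n) :
    towerMonomial x k = ∏ j ∈ range n, if k.testBit j then x (j + 1) else 1 := by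
  have extend : ∀ m ≤ k + n, k < 2 ^ m → ∏ j ∈ range m, (if k.testBit j then x (j + 1) else 1)
      = ∏ j ∈ range (k + n), if k.testBit j then x (j + 1) else 1 := fun m hm hkm =>
    prod_subset (range_subset_range.2 hm) fun j _ hj => by
      have : m ≤ j := by simpa using hj
      simp [Nat.testBit_lt_two_pow (hkm.trans_le (Nat.pow_le_pow_right two_pos this))]
  rw [towerMonomial, extend k (by omega) k.lt_two_pow_self, extend n (by omega) hk]

theorem towerMonomial_zero : towerMonomial x 0 = 1 := by
  simp [towerMonomial]

theorem towerMonomial_two_pow_add {j l : ℕ} (hl : l < 2 ^ j) :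
    towerMonomial x (2 ^ j + l) = x (j + 1) * towerMonomial x l := by
  have hjl : 2 ^ j + l < 2 ^ (j + 1) := by rw [pow_succ]; omega
  rw [towerMonomial_eq_prod_range hjl, towerMonomial_eq_prod_range (hl.trans_le
    (Nat.pow_le_pow_right two_pos j.le_succ)), prod_range_succ, prod_range_succ,
    Nat.testBit_two_pow_add_eq, Nat.testBit_lt_two_pow hl,
    prod_congr rfl fun i hi => by rw [Nat.testBit_two_pow_add_gt (mem_range.1 hi)]]
  simp [mul_comm]

theorem towerMonomial_two_pow_sub_one (j : ℕ) :
    towerMonomial x (2 ^ j - 1) = ∏ i ∈ range j, x (i + 1) := by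
  rw [towerMonomial_eq_prod_range (Nat.sub_one_lt (by positivity))]
  exact prod_congr rfl fun i hi => by simp [Nat.testBit_two_pow_sub_one, mem_range.1 hi]

end Tower

theorem iterate_artinSchreier_towerMonomial {R : Type*} [CommRing R] [CharP R 2] {x : ℕ → R}
    (hx : ∀ m, x (m + 1) ^ 2 + x (m + 1) = ∏ j ∈ range m, x (j + 1)) (k : ℕ) :
    (artinSchreier R)^[k] (towerMonomial x k) = 1 := by
  classical
  induction k using Nat.strong_induction_on with
  | _ k ih =>
  rcases k.eq_zero_or_pos with rfl | hk
  · exact towerMonomial_zero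
  obtain ⟨j, hjk, hkj⟩ : ∃ j, 2 ^ j ≤ k ∧ k < 2 ^ (j + 1) :=
    ⟨Nat.log 2 k, Nat.pow_log_le_self 2 hk.ne', Nat.lt_pow_succ_log_self one_lt_two k⟩
  obtain ⟨l, rfl⟩ := Nat.exists_eq_add_of_le hjk
  have hl : l < 2 ^ j := by rw [pow_succ] at hkj; omega
  have hgen : (artinSchreier R)^[2 ^ j] (x (j + 1)) = 1 := by
    rw [← Nat.sub_one_add_one (Nat.two_pow_pos j).ne', Function.iterate_succ_apply,
      artinSchreier_apply, hx, ← towerMonomial_two_pow_sub_one]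
    exact ih _ (by omega)
  have hlow : (artinSchreier R)^[2 ^ j] (towerMonomial x l) = 0 := by
    rw [← prod_sub_subsetSums_eq_iterate fun m hm => ih m (by omega)]
    exact prod_eq_zero (mem_subsetSums_of_lt _ hl) (sub_self _)
  rw [towerMonomial_two_pow_add hl, add_comm, Function.iterate_add_apply,
    iterate_artinSchreier_two_pow_mul hgen hlow]
  exact ih l (by omega)

/-- In the tower field construction, let `V_k` be the `GF(2)`-span of
`v₀, …, v_{k−1}` and `s_k(x) = ∏_{b ∈ V_k}(x − b)`.  Then `s_k(v_k) = 1`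
for all `k`. -/
theorem stmt_14 (F : Type*) [Field F] [CharP F 2] [DecidableEq F] (x : ℕ → F)
    (hx : ∀ m, x (m + 1) ^ 2 + x (m + 1) = ∏ j ∈ Finset.range m, x (j + 1))
    (v : ℕ → F)
    (hv : ∀ k, v k = ∏ j ∈ Finset.range k, if k.testBit j then x (j + 1) else 1) :
    ∀ k, ∏ b ∈ ((Finset.range k).powerset).image (fun S => ∑ j ∈ S, v j),
        (v k - b) = 1 := by
  obtain rfl : v = towerMonomial x := funext hv
  intro k
  rw [← iterate_artinSchreier_towerMonomial hx k]
  exact prod_sub_subsetSums_eq_iterate (fun m _ => iterate_artinSchreier_towerMonomial hx m) _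
end
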